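/- arXiv:1310.3204 — 5 statements merged into one kernel-verified Lean document; each statement's English description precedes it below -/
import Mathlib

section
/- If λ₁, λ₂, ..., λₙ are the adjacency eigenvalues of a graph G, then the adjacency eigenvalues of the extended double cover G* are ±(λ₁+1), ±(λ₂+1), ..., ±(λₙ+1). -/
open Matrix Polynomial BigOperators
open scoped Classical

/-! The characteristic matrix of `[[0, B], [B, 0]]` has the shape `[[P, Q], [Q, P]]`, and
conjugating by `[[I, 0], [I, I]]` makes such a matrix block triangular with diagonal blocks
`P - Q` and `P + Q`. Hence `χ([[0, B], [B, 0]]) = χ(B) · χ(-B)`. For `B = A + I` the roots of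
`χ(B)` are the `λᵢ + 1`, and those of `χ(-B)` their negatives. -/

namespace Matrix

variable {n R : Type*} [Fintype n] [DecidableEq n] [CommRing R]

theorem det_fromBlocks_eq_det_sub_mul_det_add (A B : Matrix n n R) :
    (fromBlocks A B B A).det = (A - B).det * (A + B).det := by
  have h : fromBlocks 1 0 1 1 * fromBlocks A B B A * fromBlocks 1 0 (-1) 1 =
      fromBlocks (A - B) B 0 (A + B) := by
    simp only [fromBlocks_multiply, fromBlocks_inj]
    refine ⟨?_, ?_, ?_, ?_⟩ <;> simp only [Matrix.one_mul, Matrix.zero_mul, Matrix.mul_one,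
      Matrix.mul_neg, Matrix.mul_zero] <;> abel
  simpa [det_fromBlocks_zero₁₂, det_fromBlocks_zero₂₁] using congrArg det h

theorem charpoly_fromBlocks_zero_self (M : Matrix n n R) :
    (fromBlocks 0 M M 0).charpoly = M.charpoly * (-M).charpoly := by
  rw [charpoly, charmatrix_fromBlocks, det_fromBlocks_eq_det_sub_mul_det_add, mul_comm]
  simp [charpoly, charmatrix, sub_eq_add_neg, Matrix.map_neg]

theorem charpoly_neg (M : Matrix n n R) :
    (-M).charpoly = (-1) ^ Fintype.card n * M.charpoly.comp (-X) := by
  have h : charmatrix (-M) = -(charmatrix M).map (compRingHom (-X)) := by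
    ext i j
    by_cases hij : i = j <;> simp [hij, add_comm]
  rw [charpoly, h, det_neg, ← RingHom.mapMatrix_apply, ← RingHom.map_det]
  rfl

theorem charpoly_neg_of_eq_prod {M : Matrix n n R} {μ : n → R}
    (h : M.charpoly = ∏ i, (X - C (μ i))) : (-M).charpoly = ∏ i, (X + C (μ i)) := by
  rw [charpoly_neg, h, prod_comp, ← Finset.card_univ, ← Finset.prod_neg]
  simp [add_comm]

theorem charpoly_add_one_of_eq_prod {M : Matrix n n R} {μ : n → R}
    (h : M.charpoly = ∏ i, (X - C (μ i))) : (M + 1).charpoly = ∏ i, (X - C (μ i + 1)) := by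
  have hscalar : M + 1 = M - scalar n (-1 : R) := by simp [sub_eq_add_neg]
  rw [hscalar, charpoly_sub_scalar, h, prod_comp]
  refine Finset.prod_congr rfl fun i _ => ?_
  simp only [sub_comp, X_comp, C_comp, map_neg, map_one, C_add]
  ring

end Matrix

theorem stmt0_general {n : ℕ} (A : Matrix (Fin n) (Fin n) ℝ)
    (lam : Fin n → ℝ)
    (hspec : A.charpoly = ∏ i, (X - C (lam i))) :
    (Matrix.fromBlocks 0 (A + 1) (A + 1) 0).charpoly =
      ∏ i, ((X - C (lam i + 1)) * (X + C (lam i + 1))) := by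
  have hshift := charpoly_add_one_of_eq_prod hspec
  rw [charpoly_fromBlocks_zero_self, charpoly_neg_of_eq_prod hshift, hshift,
    Finset.prod_mul_distrib]

/-- If λ₁,…,λₙ are the adjacency eigenvalues of a graph `G`, then the
adjacency eigenvalues of the extended double cover `G*` (whose adjacency matrix is
the block matrix `[[0, A+I],[A+I, 0]]`) are `±(λᵢ+1)` for `i = 1,…,n`. -/
theorem stmt0 {n : ℕ} (G : SimpleGraph (Fin n)) (A : Matrix (Fin n) (Fin n) ℝ)
    (hA : A = G.adjMatrix ℝ) (lam : Fin n → ℝ)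
    (hspec : A.charpoly = ∏ i, (X - C (lam i))) :
    (Matrix.fromBlocks 0 (A + 1) (A + 1) 0).charpoly =
      ∏ i, ((X - C (lam i + 1)) * (X + C (lam i + 1))) :=
  stmt0_general A lam hspec
end

section
/- Let G be a graph whose every nonzero adjacency eigenvalue λ satisfies |λ| ≥ 2. Then E(G* ⊗ K₂) = E(G**) = 4Σᵢ|λᵢ| + 4θ, where θ is the difference between the number of non-negative and negative adjacency eigenvalues of G. -/
/-!
Conjugating by `[[1, 1], [1, -1]]` shows that `fromBlocks P Q Q P` has characteristic polynomial
`χ(P + Q) · χ(P - Q)`. Hence, if `A` has eigenvalues `λᵢ`, then `G*` has spectrum `±(λᵢ + 1)`,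
`G* ⊗ K₂` (a reindexing of `fromBlocks 0 A* A* 0`, `A*` the adjacency matrix of `G*`) has that
spectrum twice, and `G**` has spectrum `±(λᵢ + 2), ±λᵢ`. As no eigenvalue lies in `(-2, 0)`,
`|λ + c| = |λ| + c` or `|λ| - c` according as `λ ≥ 0` or `λ < 0` (for `c = 1, 2`), and both
energies sum to `4 Σ |λᵢ| + 4θ`.
-/

open Matrix Polynomial Finset
open scoped Classical Kronecker

namespace Matrix

variable {m : Type*} [Fintype m] [DecidableEq m]

theorem charpoly_conj_of_mul_eq_one {R : Type*} [CommRing R] {T T' : Matrix m m R}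
    (h : T' * T = 1) (M : Matrix m m R) : (T * M * T').charpoly = M.charpoly := by
  rw [charpoly_mul_comm, ← mul_assoc, h, one_mul]

theorem charpoly_fromBlocks_self {K : Type*} [Field K] [NeZero (2 : K)] (P Q : Matrix m m K) :
    (fromBlocks P Q Q P).charpoly = (P + Q).charpoly * (P - Q).charpoly := by
  let T : Matrix (m ⊕ m) (m ⊕ m) K := fromBlocks 1 1 1 (-1)
  have hTT : T * T = (2 : K) • 1 := by
    simp only [T, fromBlocks_multiply, ← fromBlocks_one, fromBlocks_smul]
    congr 1 <;> simp [two_smul]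
  have hconj : T * fromBlocks (P + Q) 0 0 (P - Q) * T = (2 : K) • fromBlocks P Q Q P := by
    simp only [T, fromBlocks_multiply, fromBlocks_smul]
    congr 1 <;> simp [two_smul] <;> abel
  have hinv : ((2⁻¹ : K) • T) * T = 1 := by
    rw [smul_mul, hTT, smul_smul, inv_mul_cancel₀ two_ne_zero, one_smul]
  rw [← inv_smul_smul₀ (two_ne_zero (α := K)) (fromBlocks P Q Q P), ← hconj, ← mul_smul_comm,
    charpoly_conj_of_mul_eq_one hinv, charpoly_fromBlocks_zero₁₂]

theorem IsHermitian.charpoly_smul_add_smul_one {𝕜 : Type*} [RCLike 𝕜] {A : Matrix m m 𝕜}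
    (hA : A.IsHermitian) (a b : ℝ) :
    ((a : 𝕜) • A + (b : 𝕜) • 1).charpoly =
      ∏ i, (X - C ((a * hA.eigenvalues i + b : ℝ) : 𝕜)) := by
  have hD : (a : 𝕜) • A + (b : 𝕜) • 1 = Unitary.conjStarAlgAut 𝕜 _ hA.eigenvectorUnitary
      (diagonal fun i => ((a * hA.eigenvalues i + b : ℝ) : 𝕜)) := by
    conv_lhs => rw [hA.spectral_theorem]
    rw [← map_one (Unitary.conjStarAlgAut 𝕜 _ hA.eigenvectorUnitary), ← map_smul, ← map_smul,
      ← map_add]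
    congr 1
    ext i j
    by_cases h : i = j <;> simp [h, Algebra.algebraMap_eq_smul_one, add_smul, mul_smul]
  rw [hD, Unitary.conjStarAlgAut_apply, charpoly_mul_comm, ← mul_assoc]
  simp [charpoly_diagonal]

/-- Defined through the characteristic polynomial, so that it can be computed from block
decompositions; for a symmetric matrix it is `∑ i, |λᵢ|`. -/
noncomputable def energy (M : Matrix m m ℝ) : ℝ := (M.charpoly.roots.map (|·|)).sum

theorem energy_of_charpoly_eq_prod {ι : Type*} [Fintype ι] {M : Matrix m m ℝ} {f : ι → ℝ}
    (h : M.charpoly = ∏ i, (X - C (f i))) : M.energy = ∑ i, |f i| := by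
  rw [energy, h, roots_prod _ _ (prod_ne_zero_iff.mpr fun i _ => X_sub_C_ne_zero (f i))]
  simp only [roots_X_sub_C, Multiset.bind_singleton, Multiset.map_map]
  rfl

theorem IsHermitian.sum_abs_eigenvalues {A : Matrix m m ℝ} (hA : A.IsHermitian) :
    ∑ i, |hA.eigenvalues i| = A.energy :=
  (energy_of_charpoly_eq_prod (by simpa using hA.charpoly_eq)).symm

theorem IsHermitian.energy_eq_of_eq_smul_add_smul_one {A M : Matrix m m ℝ} (hA : A.IsHermitian)
    {a b : ℝ} (hM : M = a • A + b • 1) : M.energy = ∑ i, |a * hA.eigenvalues i + b| :=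
  energy_of_charpoly_eq_prod (by simpa [hM] using hA.charpoly_smul_add_smul_one a b)

theorem energy_fromBlocks_self (P Q : Matrix m m ℝ) :
    (fromBlocks P Q Q P).energy = (P + Q).energy + (P - Q).energy := by
  rw [energy, charpoly_fromBlocks_self,
    roots_mul ((charpoly_monic _).mul (charpoly_monic _)).ne_zero, Multiset.map_add,
    Multiset.sum_add, energy, energy]

theorem energy_reindex {l : Type*} [Fintype l] [DecidableEq l] (e : m ≃ l) (M : Matrix m m ℝ) :
    (reindex e e M).energy = M.energy := by
  rw [energy, charpoly_reindex, energy]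

theorem energy_kronecker_swap (M : Matrix m m ℝ) :
    (M ⊗ₖ !![(0 : ℝ), 1; 1, 0]).energy = M.energy + (-M).energy := by
  let e : m × Fin 2 ≃ m ⊕ m :=
    (Equiv.prodComm _ _).trans ((finTwoEquiv.prodCongr (Equiv.refl m)).trans
      (Equiv.boolProdEquivSum m))
  have he : reindex e e (M ⊗ₖ !![(0 : ℝ), 1; 1, 0]) = fromBlocks 0 M M 0 := by
    ext (i | i) (j | j) <;> simp [e, finTwoEquiv]
  rw [← energy_reindex e, he, energy_fromBlocks_self, zero_add, zero_sub]

def extendedDoubleCover {R : Type*} [Zero R] [One R] [Add R] (M : Matrix m m R) :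
    Matrix (m ⊕ m) (m ⊕ m) R :=
  fromBlocks 0 (M + 1) (M + 1) 0

theorem IsHermitian.energy_kronecker_extendedDoubleCover {A : Matrix m m ℝ}
    (hA : A.IsHermitian) :
    (A.extendedDoubleCover ⊗ₖ !![(0 : ℝ), 1; 1, 0]).energy =
      4 * ∑ i, |hA.eigenvalues i + 1| := by
  rw [energy_kronecker_swap, extendedDoubleCover]
  simp only [fromBlocks_neg, neg_zero, energy_fromBlocks_self, zero_add, zero_sub, neg_neg]
  rw [hA.energy_eq_of_eq_smul_add_smul_one (a := 1) (b := 1) (by module),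
    hA.energy_eq_of_eq_smul_add_smul_one (a := -1) (b := -1) (by module)]
  simp only [neg_one_mul, one_mul, ← neg_add, abs_neg]
  ring

theorem IsHermitian.energy_extendedDoubleCover_extendedDoubleCover {A : Matrix m m ℝ}
    (hA : A.IsHermitian) :
    A.extendedDoubleCover.extendedDoubleCover.energy =
      2 * ∑ i, |hA.eigenvalues i + 2| + 2 * ∑ i, |hA.eigenvalues i| := by
  rw [extendedDoubleCover, extendedDoubleCover, ← fromBlocks_one, fromBlocks_add]
  simp only [fromBlocks_neg, energy_fromBlocks_self, zero_add, add_zero, zero_sub]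
  rw [hA.energy_eq_of_eq_smul_add_smul_one (a := 1) (b := 2) (by module),
    hA.energy_eq_of_eq_smul_add_smul_one (a := -1) (b := 0) (by module),
    hA.energy_eq_of_eq_smul_add_smul_one (a := -1) (b := -2) (by module),
    hA.energy_eq_of_eq_smul_add_smul_one (a := 1) (b := 0) (by module)]
  simp only [neg_one_mul, one_mul, add_zero, ← neg_add, abs_neg]
  ring

end Matrix

theorem sum_abs_add_eq {ι : Type*} [Fintype ι] {f : ι → ℝ} {c : ℝ} (hc : 0 < c)
    (hf : ∀ i, 0 ≤ f i ∨ f i ≤ -c) :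
    ∑ i, |f i + c| = ∑ i, |f i| + c * ((#{i | 0 ≤ f i} : ℝ) - #{i | f i < 0}) := by
  have hterm : ∀ i, |f i + c| =
      |f i| + c * ((if 0 ≤ f i then 1 else 0) - (if f i < 0 then 1 else 0)) := by
    intro i
    rcases hf i with h | h
    · simp [h, not_lt.mpr h, abs_of_nonneg, add_nonneg, hc.le]
    · rw [if_neg (by linarith), if_pos (by linarith), abs_of_nonpos (a := f i + c) (by linarith),
        abs_of_neg (by linarith)]
      ring
  simp only [card_filter, Nat.cast_sum, Nat.cast_ite, Nat.cast_one, Nat.cast_zero,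
    ← sum_sub_distrib, mul_sum, ← sum_add_distrib, hterm]

theorem stmt6_general {n : ℕ} (A : Matrix (Fin n) (Fin n) ℝ)
    (hHerm : A.IsHermitian)
    (hbig : ∀ i, hHerm.eigenvalues i ≠ 0 → 2 ≤ |hHerm.eigenvalues i|)
    (Astar : Matrix (Fin n ⊕ Fin n) (Fin n ⊕ Fin n) ℝ)
    (hAstar : Astar = Matrix.fromBlocks 0 (A + 1) (A + 1) 0)
    (hKron : (Astar ⊗ₖ !![(0 : ℝ), 1; 1, 0]).IsHermitian)
    (hStar2 : (Matrix.fromBlocks 0 (Astar + 1) (Astar + 1) 0).IsHermitian)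
    (θ : ℝ)
    (hθ : θ = ((Finset.univ.filter fun i => 0 ≤ hHerm.eigenvalues i).card : ℝ) -
        ((Finset.univ.filter fun i => hHerm.eigenvalues i < 0).card : ℝ)) :
    (∑ p, |hKron.eigenvalues p| = ∑ q, |hStar2.eigenvalues q|) ∧
      ∑ p, |hKron.eigenvalues p| = 4 * (∑ i, |hHerm.eigenvalues i|) + 4 * θ := by
  have hgap : ∀ i, 0 ≤ hHerm.eigenvalues i ∨ hHerm.eigenvalues i ≤ -2 := by
    intro i
    by_contra! h
    have := hbig i h.1.ne
    rw [abs_of_neg h.1] at this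
    linarith
  have hshift₁ := sum_abs_add_eq one_pos fun i => (hgap i).imp_right fun h => by linarith
  have hshift₂ := sum_abs_add_eq two_pos hgap
  subst hAstar
  have hK : ∑ p, |hKron.eigenvalues p| = 4 * ∑ i, |hHerm.eigenvalues i + 1| :=
    hKron.sum_abs_eigenvalues.trans hHerm.energy_kronecker_extendedDoubleCover
  have hS : ∑ q, |hStar2.eigenvalues q| =
      2 * ∑ i, |hHerm.eigenvalues i + 2| + 2 * ∑ i, |hHerm.eigenvalues i| :=
    hStar2.sum_abs_eigenvalues.trans hHerm.energy_extendedDoubleCover_extendedDoubleCover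
  rw [← hθ] at hshift₁ hshift₂
  constructor <;> linarith

/-- Let `G` be a graph whose every nonzero adjacency eigenvalue `λ`
satisfies `|λ| ≥ 2`.  Then `E(G* ⊗ K₂) = E(G**) = 4·Σᵢ|λᵢ| + 4θ`, where `θ` is the
difference between the number of non-negative and of negative adjacency eigenvalues
of `G`.  Here `G*` has adjacency matrix `[[0, A+I],[A+I, 0]]` and `G** = (G*)*`. -/
theorem stmt6 {n : ℕ} (G : SimpleGraph (Fin n)) (A : Matrix (Fin n) (Fin n) ℝ)
    (hA : A = G.adjMatrix ℝ) (hHerm : A.IsHermitian)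
    (hbig : ∀ i, hHerm.eigenvalues i ≠ 0 → 2 ≤ |hHerm.eigenvalues i|)
    (Astar : Matrix (Fin n ⊕ Fin n) (Fin n ⊕ Fin n) ℝ)
    (hAstar : Astar = Matrix.fromBlocks 0 (A + 1) (A + 1) 0)
    (hKron : (Astar ⊗ₖ !![(0 : ℝ), 1; 1, 0]).IsHermitian)
    (hStar2 : (Matrix.fromBlocks 0 (Astar + 1) (Astar + 1) 0).IsHermitian)
    (θ : ℝ)
    (hθ : θ = ((Finset.univ.filter fun i => 0 ≤ hHerm.eigenvalues i).card : ℝ) -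
        ((Finset.univ.filter fun i => hHerm.eigenvalues i < 0).card : ℝ)) :
    (∑ p, |hKron.eigenvalues p| = ∑ q, |hStar2.eigenvalues q|) ∧
      ∑ p, |hKron.eigenvalues p| = 4 * (∑ i, |hHerm.eigenvalues i|) + 4 * θ :=
  stmt6_general A hHerm hbig Astar hAstar hKron hStar2 θ hθ
end

section
/- Let G be a bipartite graph. Then the extended double cover G* and the double graph D[G] have equal energy, E(G*) = E(D[G]) = 2E(G), if and only if every adjacency eigenvalue λᵢ of G satisfies |λᵢ| ≥ 1. -/
/-! Conjugation by `P = [[1, 1], [1, -1]]` block-diagonalises both matrices: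
`[[0, B], [B, 0]] ~ diag(B, -B)` and `[[A, A], [A, A]] ~ diag(2A, 0)`. Hence
`E(G*) = 2 ∑ |λᵢ + 1|` and `E(D[G]) = 2 E(G)`. For bipartite `G` the spectrum is symmetric, so
`2 ∑ |λᵢ + 1| = ∑ (|λᵢ + 1| + |λᵢ - 1|)`, and termwise `|λ + 1| + |λ - 1| ≥ 2 |λ|`, with equality
exactly when `|λ| ≥ 1`. Spectra are compared through characteristic polynomials. -/

open Matrix Polynomial BigOperators
open scoped Classical Kronecker

namespace Polynomial

theorem roots_prod_X_sub_C_univ {R ι : Type*} [CommRing R] [IsDomain R] [Fintype ι]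
    (μ : ι → R) : (∏ i, (X - C (μ i))).roots = Finset.univ.val.map μ := by
  rw [← roots_multiset_prod_X_sub_C (Finset.univ.val.map μ), Multiset.map_map]
  rfl

theorem sum_eq_sum_of_prod_X_sub_C_eq {R M ι κ : Type*} [CommRing R] [IsDomain R]
    [AddCommMonoid M] [Fintype ι] [Fintype κ] {μ : ι → R} {ν : κ → R}
    (h : ∏ i, (X - C (μ i)) = ∏ j, (X - C (ν j))) (g : R → M) :
    ∑ i, g (μ i) = ∑ j, g (ν j) := by
  have hroots := congrArg roots h
  rw [roots_prod_X_sub_C_univ, roots_prod_X_sub_C_univ] at hroots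
  simpa [Finset.sum_map_val] using congrArg (fun s => (s.map g).sum) hroots

end Polynomial

namespace Matrix

variable {n : Type*} [Fintype n] [DecidableEq n]

theorem charpoly_mul_mul_of_mul_eq_one {R : Type*} [CommRing R] {P Q : Matrix n n R}
    (h : Q * P = 1) (M : Matrix n n R) : (P * M * Q).charpoly = M.charpoly := by
  rw [charpoly_mul_comm, ← mul_assoc, h, one_mul]

section Blocks

variable {K : Type*} [Field K] [NeZero (2 : K)]

theorem smul_fromBlocks_one_one_one_neg_one_mul_self :
    ((2⁻¹ : K) • fromBlocks 1 1 1 (-1) : Matrix (n ⊕ n) (n ⊕ n) K) * fromBlocks 1 1 1 (-1) =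
      1 := by
  rw [smul_mul, fromBlocks_multiply, fromBlocks_smul, ← fromBlocks_one]
  congr 1 <;> simp <;> match_scalars <;> field_simp <;> ring

theorem charpoly_fromBlocks_zero_self_self_zero (B : Matrix n n K) :
    (fromBlocks 0 B B 0).charpoly = B.charpoly * (-B).charpoly := by
  have hconj : fromBlocks 1 1 1 (-1) * fromBlocks B 0 0 (-B) *
      ((2⁻¹ : K) • fromBlocks 1 1 1 (-1)) = fromBlocks 0 B B 0 := by
    rw [Matrix.mul_smul, fromBlocks_multiply, fromBlocks_multiply, fromBlocks_smul]
    congr 1 <;> simp <;> match_scalars <;> field_simp <;> ring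
  rw [← hconj, charpoly_mul_mul_of_mul_eq_one smul_fromBlocks_one_one_one_neg_one_mul_self,
    charpoly_fromBlocks_zero₂₁]

theorem charpoly_fromBlocks_self_self_self_self (A : Matrix n n K) :
    (fromBlocks A A A A).charpoly = ((2 : K) • A).charpoly * (0 : Matrix n n K).charpoly := by
  have hconj : fromBlocks 1 1 1 (-1) * fromBlocks ((2 : K) • A) 0 0 0 *
      ((2⁻¹ : K) • fromBlocks 1 1 1 (-1)) = fromBlocks A A A A := by
    rw [Matrix.mul_smul, fromBlocks_multiply, fromBlocks_multiply, fromBlocks_smul]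
    congr 1 <;> simp <;> match_scalars <;> field_simp
  rw [← hconj, charpoly_mul_mul_of_mul_eq_one smul_fromBlocks_one_one_one_neg_one_mul_self,
    charpoly_fromBlocks_zero₂₁]

end Blocks

namespace IsHermitian

theorem charpoly_smul_add_smul_one_s7 {𝕜 : Type*} [RCLike 𝕜] {A : Matrix n n 𝕜} (hA : A.IsHermitian)
    (a b : 𝕜) :
    (a • A + b • 1).charpoly = ∏ i, (X - C (a * hA.eigenvalues i + b)) := by
  have hdiag : a • A + b • 1 = Unitary.conjStarAlgAut 𝕜 _ hA.eigenvectorUnitary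
      (diagonal fun i => a * hA.eigenvalues i + b) := by
    conv_lhs => rw [hA.spectral_theorem]
    rw [← map_smul, ← map_one (Unitary.conjStarAlgAut 𝕜 _ hA.eigenvectorUnitary), ← map_smul,
      ← map_add]
    congr 1
    ext i j
    by_cases hij : i = j <;> simp [hij]
  rw [hdiag, Unitary.conjStarAlgAut_apply, charpoly_mul_comm, ← mul_assoc]
  simp [charpoly_diagonal]

variable {A : Matrix n n ℝ}

theorem sum_eigenvalues_eq_of_charpoly_eq (hA : A.IsHermitian) {ι M : Type*}
    [Fintype ι] [AddCommMonoid M] {μ : ι → ℝ} (h : A.charpoly = ∏ i, (X - C (μ i)))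
    (g : ℝ → M) : ∑ i, g (hA.eigenvalues i) = ∑ i, g (μ i) := by
  refine sum_eq_sum_of_prod_X_sub_C_eq ?_ g
  simpa using hA.charpoly_eq.symm.trans h

theorem sum_eigenvalues_neg_eq_of_charpoly_neg_eq (hA : A.IsHermitian)
    (h : (-A).charpoly = A.charpoly) {M : Type*} [AddCommMonoid M] (g : ℝ → M) :
    ∑ i, g (-hA.eigenvalues i) = ∑ i, g (hA.eigenvalues i) := by
  refine (hA.sum_eigenvalues_eq_of_charpoly_eq ?_ g).symm
  simpa [← h] using hA.charpoly_smul_add_smul_one_s7 (-1) 0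

end IsHermitian

theorem sum_abs_eigenvalues_fromBlocks_zero_self_self_zero {B : Matrix n n ℝ}
    (hB : B.IsHermitian)     (h : (fromBlocks 0 B B 0).IsHermitian) :
    ∑ i, |h.eigenvalues i| = 2 * ∑ i, |hB.eigenvalues i| := by
  have hcharpoly : (fromBlocks 0 B B 0).charpoly =
      ∏ i, (X - C (Sum.elim hB.eigenvalues (fun i => -hB.eigenvalues i) i)) := by
    rw [charpoly_fromBlocks_zero_self_self_zero, Fintype.prod_sum_type, hB.charpoly_eq,
      ← neg_one_smul ℝ B, ← add_zero ((-1 : ℝ) • B), ← zero_smul ℝ (1 : Matrix n n ℝ),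
      hB.charpoly_smul_add_smul_one_s7]
    simp
  rw [h.sum_eigenvalues_eq_of_charpoly_eq hcharpoly, Fintype.sum_sum_type]
  simp [two_mul]

theorem sum_abs_eigenvalues_fromBlocks_self_self_self_self {A : Matrix n n ℝ}
    (hA : A.IsHermitian)     (h : (fromBlocks A A A A).IsHermitian) :
    ∑ i, |h.eigenvalues i| = 2 * ∑ i, |hA.eigenvalues i| := by
  have hcharpoly : (fromBlocks A A A A).charpoly =
      ∏ i, (X - C (Sum.elim (fun i => 2 * hA.eigenvalues i) (fun _ : n => 0) i)) := by
    rw [charpoly_fromBlocks_self_self_self_self, Fintype.prod_sum_type, charpoly_zero,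
      ← add_zero ((2 : ℝ) • A), ← zero_smul ℝ (1 : Matrix n n ℝ),
      hA.charpoly_smul_add_smul_one_s7]
    simp
  rw [h.sum_eigenvalues_eq_of_charpoly_eq hcharpoly, Fintype.sum_sum_type]
  simp [abs_mul, Finset.mul_sum]

end Matrix

theorem SimpleGraph.charpoly_neg_adjMatrix_of_colorable_two {V R : Type*} [Fintype V]
    [DecidableEq V] [CommRing R] (G : SimpleGraph V) [DecidableRel G.Adj] (hG : G.Colorable 2) :
    (-G.adjMatrix R).charpoly = (G.adjMatrix R).charpoly := by
  obtain ⟨c⟩ := hG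
  let S : Matrix V V R := diagonal fun v => if c v = 0 then 1 else -1
  have hS : S * S = 1 := by
    rw [diagonal_mul_diagonal, ← diagonal_one]
    congr 1
    ext v
    split_ifs <;> simp
  have hSAS : S * G.adjMatrix R * S = -G.adjMatrix R := by
    ext v w
    simp only [S, mul_diagonal, diagonal_mul, adjMatrix_apply]
    by_cases hvw : G.Adj v w
    · have hc := c.valid hvw
      generalize c v = a, c w = b at hc
      fin_cases a <;> fin_cases b <;> simp_all
    · simp [hvw]
  rw [← hSAS, charpoly_mul_mul_of_mul_eq_one hS]

theorem sum_two_mul_abs_eq_sum_abs_add_one_add_abs_sub_one_iff {ι : Type*} [Fintype ι]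
    (μ : ι → ℝ) :
    ∑ i, 2 * |μ i| = ∑ i, (|μ i + 1| + |μ i - 1|) ↔ ∀ i, 1 ≤ |μ i| := by
  have hle : ∀ i ∈ Finset.univ, 2 * |μ i| ≤ |μ i + 1| + |μ i - 1| := fun i _ => by
    have := abs_add_le (μ i + 1) (μ i - 1)
    rwa [show μ i + 1 + (μ i - 1) = 2 * μ i by ring, abs_mul, abs_two] at this
  rw [Finset.sum_eq_sum_iff_of_le hle]
  refine forall_congr' fun i => ?_
  simp only [Finset.mem_univ, true_imp_iff]
  rcases abs_cases (μ i) with ⟨h₁, h₂⟩ | ⟨h₁, h₂⟩ <;>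
    rcases abs_cases (μ i + 1) with ⟨h₃, h₄⟩ | ⟨h₃, h₄⟩ <;>
    rcases abs_cases (μ i - 1) with ⟨h₅, h₆⟩ | ⟨h₅, h₆⟩ <;>
    constructor <;> intro h <;> linarith

/-- Let `G` be a bipartite graph.  Then the extended double cover `G*`
(adjacency matrix `[[0, A+I],[A+I, 0]]`) and the double graph `D[G]` (adjacency
matrix `[[A,A],[A,A]]`) have equal energy, `E(G*) = E(D[G]) = 2E(G)`, if and only if
every adjacency eigenvalue `λᵢ` of `G` satisfies `|λᵢ| ≥ 1`. -/
theorem stmt7 {n : ℕ} (G : SimpleGraph (Fin n)) (hbip : G.Colorable 2)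
    (A : Matrix (Fin n) (Fin n) ℝ) (hA : A = G.adjMatrix ℝ) (hHerm : A.IsHermitian)
    (hStar : (Matrix.fromBlocks 0 (A + 1) (A + 1) 0).IsHermitian)
    (hD : (Matrix.fromBlocks A A A A).IsHermitian) :
    (∑ p, |hStar.eigenvalues p| = ∑ q, |hD.eigenvalues q| ∧
        ∑ q, |hD.eigenvalues q| = 2 * ∑ i, |hHerm.eigenvalues i|) ↔
      ∀ i, 1 ≤ |hHerm.eigenvalues i| := by
  have hShift : (A + 1).IsHermitian := hHerm.add isHermitian_one
  have hEnergyShift : ∑ i, |hShift.eigenvalues i| = ∑ i, |hHerm.eigenvalues i + 1| := by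
    refine hShift.sum_eigenvalues_eq_of_charpoly_eq ?_ abs
    simpa using hHerm.charpoly_smul_add_smul_one_s7 1 1
  have hSymm : ∑ i, |hHerm.eigenvalues i + 1| = ∑ i, |hHerm.eigenvalues i - 1| := by
    have hNeg := G.charpoly_neg_adjMatrix_of_colorable_two (R := ℝ) hbip
    rw [← hA] at hNeg
    rw [← hHerm.sum_eigenvalues_neg_eq_of_charpoly_neg_eq hNeg fun x => |x - 1|]
    exact Finset.sum_congr rfl fun i _ => by rw [← abs_neg, neg_add']
  rw [sum_abs_eigenvalues_fromBlocks_zero_self_self_zero hShift,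
    sum_abs_eigenvalues_fromBlocks_self_self_self_self hHerm, hEnergyShift,
    ← sum_two_mul_abs_eq_sum_abs_add_one_add_abs_sub_one_iff, ← Finset.mul_sum,
    Finset.sum_add_distrib, ← hSymm]
  constructor
  · rintro ⟨h, -⟩
    linarith
  · intro h
    exact ⟨by linarith, rfl⟩
end

section
/- Let G be a graph with Laplacian eigenvalues μ₁,...,μₙ and signless Laplacian eigenvalues μ₁⁺,...,μₙ⁺. Then the Laplacian eigenvalues of the extended double cover G* are μ₁,...,μₙ, μ₁⁺+2,...,μₙ⁺+2; equivalently, the Laplacian characteristic polynomial of G* factors as C_{G*}(λ) = Q_G(λ−2)·C_G(λ), where C_G and Q_G are the Laplacian and signless Laplacian characteristic polynomials of G. -/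
open Matrix Polynomial BigOperators
open scoped Classical

namespace Matrix

variable {m R : Type*} [DecidableEq m] [Fintype m] [CommRing R]

theorem charpoly_fromBlocks_self_s8 (M N : Matrix m m R) :
    (fromBlocks M N N M).charpoly = (M + N).charpoly * (M - N).charpoly := by
  -- conjugating by the block shear `[[1, 0], [1, 1]]` makes the matrix block triangular
  set P : Matrix (m ⊕ m) (m ⊕ m) R := fromBlocks 1 0 1 1
  set P' : Matrix (m ⊕ m) (m ⊕ m) R := fromBlocks 1 0 (-1) 1
  have hPP' : P * P' = 1 := by simp [P, P', fromBlocks_multiply, fromBlocks_one]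
  have htri : P' * fromBlocks M N N M * P = fromBlocks (M + N) N 0 (M - N) := by
    simp only [P, P', fromBlocks_multiply]
    congr 1 <;> noncomm_ring
  calc (fromBlocks M N N M).charpoly = (P' * fromBlocks M N N M * P).charpoly := by
        rw [charpoly_mul_comm, ← mul_assoc, hPP', one_mul]
    _ = (M + N).charpoly * (M - N).charpoly := by
        rw [htri, charpoly_fromBlocks_zero₂₁]

end Matrix

theorem stmt8_general {n : ℕ}
    (A D L Q : Matrix (Fin n) (Fin n) ℝ)
    (hL : L = D - A) (hQ : Q = D + A) :
    (Matrix.fromBlocks (D + 1) (-(A + 1)) (-(A + 1)) (D + 1)).charpoly =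
      Q.charpoly.comp (X - C 2) * L.charpoly := by
  have hsum : D + 1 + -(A + 1) = L := by rw [hL]; abel
  have hdiff : D + 1 - -(A + 1) = Q - scalar (Fin n) (-2 : ℝ) := by
    rw [hQ, scalar_apply, ← neg_one_smul ℝ, ← smul_one_eq_diagonal]
    module
  rw [charpoly_fromBlocks_self_s8, hsum, hdiff, charpoly_sub_scalar, mul_comm, map_neg,
    ← sub_eq_add_neg]

/-- For a graph `G` with Laplacian `L = D − A` and signless Laplacian
`Q = D + A`, the Laplacian of the extended double cover `G*` is
`[[D+I, −(A+I)],[−(A+I), D+I]]`, and its characteristic polynomial factors as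
`C_{G*}(λ) = Q_G(λ−2)·C_G(λ)`; equivalently, if the Laplacian eigenvalues of `G`
are `μᵢ` and the signless Laplacian eigenvalues are `μᵢ⁺`, then the Laplacian
eigenvalues of `G*` are the `μᵢ` together with the `μᵢ⁺ + 2`. -/
theorem stmt8 {n : ℕ} (G : SimpleGraph (Fin n))
    (A D L Q : Matrix (Fin n) (Fin n) ℝ)
    (hA : A = G.adjMatrix ℝ)
    (hD : D = Matrix.diagonal fun i => (G.degree i : ℝ))
    (hL : L = D - A) (hQ : Q = D + A) :
    (Matrix.fromBlocks (D + 1) (-(A + 1)) (-(A + 1)) (D + 1)).charpoly =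
      Q.charpoly.comp (X - C 2) * L.charpoly :=
  stmt8_general A D L Q hL hQ
end

section
/- Let G be a graph on n vertices with m edges and Laplacian eigenvalues μ₁,...,μₙ. The Laplacian spectrum of the k-fold graph D^k[G] is kμ₁,...,kμₙ together with kdᵢ for each vertex degree dᵢ, each with multiplicity (k−1) per vertex (i.e., kd₁,...,kdₙ each repeated k−1 times). -/
/-!
`L(D^k[G]) = kD ⊗ I_k - A ⊗ J_k`, where `J_k` is the all-ones matrix. Conjugating by `I ⊗ P`, where `P` diagonalises `J_k` as `diag(k, 0, …, 0)`,
turns this into the block-diagonal matrix with one block `kD - kA = k L(G)` and `k - 1` blocks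
`kD`, whose characteristic polynomials are read off from that of `L(G)` and from the diagonal.
-/

open Matrix Polynomial BigOperators
open scoped Classical

/-- The k-fold graph `D^k[G]`: k copies of `G` where each vertex in one copy is
joined to the neighbours of the corresponding vertices in all copies. -/
def kfold {V : Type*} (G : SimpleGraph V) (k : ℕ) : SimpleGraph (V × Fin k) where
  Adj u v := G.Adj u.1 v.1
  symm := ⟨fun _ _ h => G.adj_symm h⟩
  loopless := ⟨fun u h => G.irrefl h⟩

/-- The Laplacian matrix `L = D − A` of a graph. -/
noncomputable def lap {V : Type*} [Fintype V] [DecidableEq V] (G : SimpleGraph V) :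
    Matrix V V ℝ :=
  Matrix.diagonal (fun i => (G.degree i : ℝ)) - G.adjMatrix ℝ

open scoped Kronecker

namespace Matrix

theorem charpoly_mul_mul_of_mul_eq_one_s16 {m R : Type*} [Fintype m] [DecidableEq m] [CommRing R]
    (M : Matrix m m R) {S T : Matrix m m R} (hST : S * T = 1) :
    (T * M * S).charpoly = M.charpoly := by
  rw [charpoly_mul_comm, ← Matrix.mul_assoc, hST, Matrix.one_mul]

theorem charpoly_blockDiagonal {m o R : Type*} [Fintype m] [DecidableEq m] [Fintype o]
    [DecidableEq o] [CommRing R] (M : o → Matrix m m R) :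
    (blockDiagonal M).charpoly = ∏ a, (M a).charpoly := by
  have : charmatrix (blockDiagonal M) = blockDiagonal fun a => charmatrix (M a) := by
    ext ⟨i, a⟩ ⟨j, b⟩
    by_cases hab : a = b <;> by_cases hij : i = j <;> simp [blockDiagonal_apply, *]
  rw [charpoly, this, det_blockDiagonal]
  rfl

section Smul

variable {m K : Type*} [Fintype m] [DecidableEq m] [Field K]

theorem charmatrix_smul (M : Matrix m m K) {c : K} (hc : c ≠ 0) :
    charmatrix (c • M) = C c • (charmatrix M).map (compRingHom (C c⁻¹ * X)) := by
  have hX : C c * (C c⁻¹ * X) = (X : K[X]) := by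
    rw [← mul_assoc, ← C_mul, mul_inv_cancel₀ hc, C_1, one_mul]
  ext1 i j
  by_cases hij : i = j
  · subst hij
    simp only [charmatrix_apply_eq, smul_apply, map_apply, coe_compRingHom_apply, sub_comp,
      X_comp, C_comp, smul_eq_mul, mul_sub, hX, C_mul]
  · simp [hij, C_mul]

theorem charpoly_smul_eq_prod (M : Matrix m m K) {c : K} (hc : c ≠ 0) (μ : m → K)
    (hM : M.charpoly = ∏ i, (X - C (μ i))) :
    (c • M).charpoly = ∏ i, (X - C (c * μ i)) := by
  rw [charpoly, charmatrix_smul M hc, det_smul, ← RingHom.mapMatrix_apply, ← RingHom.map_det,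
    ← charpoly, hM, map_prod, ← Finset.card_univ, ← Finset.prod_const,
    ← Finset.prod_mul_distrib]
  refine Finset.prod_congr rfl fun i _ => ?_
  rw [coe_compRingHom_apply, sub_comp, X_comp, C_comp, mul_sub, ← mul_assoc, ← C_mul,
    mul_inv_cancel₀ hc, C_1, one_mul, C_mul]

end Smul

theorem one_kronecker_mul_kronecker_sub_mul_one_kronecker {m ι R : Type*} [Fintype m]
    [DecidableEq m] [Fintype ι] [DecidableEq ι] [CommRing R] (D A : Matrix m m R)
    {J S T E : Matrix ι ι R} (hTS : T * S = 1) (hJS : J * S = S * E) :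
    (1 ⊗ₖ T) * (D ⊗ₖ 1 - A ⊗ₖ J) * (1 ⊗ₖ S) = D ⊗ₖ 1 - A ⊗ₖ E := by
  simp only [Matrix.mul_sub, Matrix.sub_mul, ← mul_kronecker_mul, Matrix.one_mul, Matrix.mul_one,
    Matrix.mul_assoc, hJS, ← Matrix.mul_assoc T, hTS]

theorem kronecker_one_sub_kronecker_diagonal {m ι R : Type*} [DecidableEq ι] [CommRing R]
    (D A : Matrix m m R) (e : ι → R) :
    D ⊗ₖ (1 : Matrix ι ι R) - A ⊗ₖ diagonal e = blockDiagonal fun a => D - e a • A := by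
  rw [← diagonal_one, kronecker_diagonal, kronecker_diagonal, ← blockDiagonal_sub]
  simp only [op_smul_eq_smul, one_smul]
  rfl

section AllOnes

variable {K : Type*} [Field K] (k : ℕ)

/-- Columns: the all-ones vector (eigenvalue `k + 1` of the all-ones matrix), then `e₀ - e_b`
for `b ≠ 0` (eigenvalue `0`). -/
def allOnesEigenbasis : Matrix (Fin (k + 1)) (Fin (k + 1)) K :=
  of fun j b => if b = 0 then 1 else (Pi.single 0 1 - Pi.single b 1 : Fin (k + 1) → K) j

def allOnesEigenbasisInv : Matrix (Fin (k + 1)) (Fin (k + 1)) K :=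
  of fun a j => ((k + 1 : ℕ) : K)⁻¹ - if a = 0 then 0 else (Pi.single a 1 : Fin (k + 1) → K) j

theorem allOnes_mul_allOnesEigenbasis :
    of (fun _ _ => 1) * allOnesEigenbasis k =
      allOnesEigenbasis k * diagonal (Pi.single 0 ((k + 1 : ℕ) : K)) := by
  ext a b
  rw [mul_diagonal]
  by_cases hb : b = 0 <;> simp [allOnesEigenbasis, mul_apply, hb]

theorem allOnesEigenbasisInv_mul [CharZero K] :
    allOnesEigenbasisInv (K := K) k * allOnesEigenbasis k = 1 := by
  have hk : (k : K) + 1 ≠ 0 := Nat.cast_add_one_ne_zero k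
  ext a b
  rcases eq_or_ne b 0 with rfl | hb <;> rcases eq_or_ne a 0 with rfl | ha <;>
    simp [allOnesEigenbasis, allOnesEigenbasisInv, mul_apply, one_apply, mul_sub,
      Finset.sum_sub_distrib, Pi.single_apply, *] <;>
    grind

end AllOnes

theorem charpoly_kronecker_one_sub_kronecker_allOnes {m K : Type*} [Fintype m] [DecidableEq m]
    [Field K] [CharZero K] (D A : Matrix m m K) (k : ℕ) :
    (D ⊗ₖ (1 : Matrix (Fin (k + 1)) (Fin (k + 1)) K) - A ⊗ₖ of fun _ _ => 1).charpoly =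
      (D - ((k + 1 : ℕ) : K) • A).charpoly * D.charpoly ^ k := by
  have hTS := allOnesEigenbasisInv_mul (K := K) k
  have hST : ((1 : Matrix m m K) ⊗ₖ allOnesEigenbasis k) * (1 ⊗ₖ allOnesEigenbasisInv k) = 1 := by
    rw [← mul_kronecker_mul, Matrix.one_mul, mul_eq_one_comm.mp hTS, one_kronecker_one]
  rw [← charpoly_mul_mul_of_mul_eq_one_s16 _ hST,
    one_kronecker_mul_kronecker_sub_mul_one_kronecker D A hTS (allOnes_mul_allOnesEigenbasis k),
    kronecker_one_sub_kronecker_diagonal, charpoly_blockDiagonal, Fin.prod_univ_succ]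
  simp [Fin.succ_ne_zero]

end Matrix

section KFold

variable {V : Type*} (G : SimpleGraph V) (k : ℕ)

@[simp]
theorem kfold_adj {v w : V × Fin k} : (kfold G k).Adj v w ↔ G.Adj v.1 w.1 := Iff.rfl

variable [Fintype V]

theorem kfold_degree (v : V × Fin k) : (kfold G k).degree v = k * G.degree v.1 := by
  have : (kfold G k).neighborFinset v = G.neighborFinset v.1 ×ˢ Finset.univ := by
    ext w
    simp
  rw [SimpleGraph.degree, this, Finset.card_product, Finset.card_univ, Fintype.card_fin,
    mul_comm, SimpleGraph.degree]

theorem lap_kfold [DecidableEq V] :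
    lap (kfold G k) = diagonal (fun i => (k : ℝ) * G.degree i) ⊗ₖ 1 -
      G.adjMatrix ℝ ⊗ₖ of fun _ _ => 1 := by
  ext ⟨i, a⟩ ⟨j, b⟩
  by_cases hij : i = j <;> by_cases hab : a = b <;>
    simp [lap, one_apply, kfold_degree, hij, hab]

end KFold

/-- Let `G` be a graph on `n` vertices with Laplacian eigenvalues
`μ₁,…,μₙ` and vertex degrees `d₁,…,dₙ`.  The Laplacian spectrum of the k-fold graph
`D^k[G]` is `kμ₁,…,kμₙ` together with `kd₁,…,kdₙ`, each degree value repeated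
`k−1` times. -/
theorem stmt16 {n : ℕ} (G : SimpleGraph (Fin n)) (μ : Fin n → ℝ)
    (hspec : (lap G).charpoly = ∏ i, (X - C (μ i))) (k : ℕ) (hk : 1 ≤ k) :
    (lap (kfold G k)).charpoly =
      (∏ i, (X - C ((k : ℝ) * μ i))) *
        ∏ i, (X - C ((k : ℝ) * (G.degree i : ℝ))) ^ (k - 1) := by
  obtain ⟨k, rfl⟩ : ∃ j, k = j + 1 := ⟨k - 1, by omega⟩
  have hblock : diagonal (fun i => ((k + 1 : ℕ) : ℝ) * G.degree i) -
      ((k + 1 : ℕ) : ℝ) • G.adjMatrix ℝ = ((k + 1 : ℕ) : ℝ) • lap G := by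
    rw [lap, smul_sub, ← diagonal_smul]
    rfl
  rw [lap_kfold, charpoly_kronecker_one_sub_kronecker_allOnes, hblock,
    charpoly_smul_eq_prod _ (Nat.cast_ne_zero.mpr k.succ_ne_zero) μ hspec, charpoly_diagonal,
    Nat.add_sub_cancel, Finset.prod_pow]
end
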